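/- arXiv:1906.01591 — 3 statements merged into one kernel-verified Lean document; each statement's English description precedes it below -/
import Mathlib

section
/- Monogamy of perfect pair state transfer: let G be a finite simple graph with Laplacian L and transition matrix U(t) = exp(itL), and let a ≠ b be vertices of G. Suppose there is perfect pair state transfer from (a,b) to (c,d) at some time t₁ > 0 and from (a,b) to (c′,d′) at some time t₂ > 0, where c ≠ d, c′ ≠ d′, {c,d} ≠ {a,b}, and {c′,d′} ≠ {a,b}. Then {c,d} = {c′,d′} as unordered pairs. -/
open Matrix

variable {V : Type*}

/-- The transition matrix `U(t) = exp(itL)` of the continuous quantum walk on `G`,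
where `L` is the Laplacian of `G`. -/
noncomputable def transitionMatrix [Fintype V] [DecidableEq V] (G : SimpleGraph V)
    [DecidableRel G.Adj] (t : ℝ) : Matrix V V ℂ :=
  NormedSpace.exp ((Complex.I * (t : ℂ)) • G.lapMatrix ℂ)

/-- The pair state `e_a - e_b`. -/
def pairState [DecidableEq V] (a b : V) : V → ℂ := Pi.single a 1 - Pi.single b 1

/-- Perfect pair state transfer from `(a,b)` to `(c,d)` at time `t`. -/
def PerfectPairStateTransfer [Fintype V] [DecidableEq V] (G : SimpleGraph V)
    [DecidableRel G.Adj] (t : ℝ) (a b c d : V) : Prop :=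
  ∃ γ : ℂ, ‖γ‖ = 1 ∧
    (transitionMatrix G t).mulVec (pairState a b) = γ • pairState c d

/-!
In an orthonormal eigenbasis of `L` (eigenvalues `θ j`), `U(t)` acts by the phases `exp(i t θ j)`.
Since `U(t)` is symmetric and unitary and pair states are real, a transfer `U(t) x = γ y` also
gives `U(t) y = γ x`; in eigen-coordinates this forces `ŷ j = s j * x̂ j` with signs
`s j = conj γ * exp(i t θ j) = ±1` on the support of `x̂`, so `s i * s j = exp(i t (θ i - θ j))`.
Write `t₁ (θ i - θ j) = k π` and `t₂ (θ i - θ j) = m π`: the cross products `k m' = k' m` agree for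
all pairs, so once both sign patterns are non-constant the parities of `k` and `m` coincide and
the two patterns agree up to a global sign, i.e. `e_c' - e_d' = ±(e_c - e_d)`. A constant pattern
would give `e_c - e_d = ±(e_a - e_b)`, which is excluded.
-/

open Complex
open scoped ComplexConjugate Real

theorem exists_int_of_exp_mul_I_sq_eq_one {r : ℝ} (h : cexp (r * I) ^ 2 = 1) :
    ∃ k : ℤ, r = k * π ∧ cexp (r * I) = (-1) ^ k := by
  rw [← Complex.exp_nat_mul, Complex.exp_eq_one_iff] at h
  obtain ⟨k, hk⟩ := h
  have hr : r = k * π := by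
    have : ((r : ℂ) - k * π) * (2 * I) = 0 := by linear_combination hk
    exact_mod_cast sub_eq_zero.mp ((mul_eq_zero.mp this).resolve_right (by simp))
  refine ⟨k, hr, ?_⟩
  rw [hr, ← exp_pi_mul_I, ← exp_int_mul]
  push_cast
  ring_nf

theorem Int.even_iff_even_of_mul_eq_mul {k m k₁ m₁ k₂ m₂ : ℤ} (h₁ : k * m₁ = k₁ * m)
    (h₂ : k * m₂ = k₂ * m) (hk₁ : Odd k₁) (hm₂ : Odd m₂) : Even k ↔ Even m := by
  constructor
  · intro hk
    have : Even (k₁ * m) := h₁ ▸ hk.mul_right m₁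
    exact (Int.even_mul.mp this).resolve_left (Int.not_even_iff_odd.mpr hk₁)
  · intro hm
    have : Even (k * m₂) := h₂ ▸ hm.mul_left k₂
    exact (Int.even_mul.mp this).resolve_right (Int.not_even_iff_odd.mpr hm₂)

theorem exp_mul_I_eq_of_eq_neg_one {t₁ t₂ δ δ₁ δ₂ : ℝ}
    (hδ₁ : cexp (↑(t₁ * δ₁) * I) = -1) (hδ₁' : cexp (↑(t₂ * δ₁) * I) ^ 2 = 1)
    (hδ₂ : cexp (↑(t₂ * δ₂) * I) = -1) (hδ₂' : cexp (↑(t₁ * δ₂) * I) ^ 2 = 1)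
    (hδ : cexp (↑(t₁ * δ) * I) ^ 2 = 1) (hδ' : cexp (↑(t₂ * δ) * I) ^ 2 = 1) :
    cexp (↑(t₁ * δ) * I) = cexp (↑(t₂ * δ) * I) := by
  obtain ⟨k, hk, hek⟩ := exists_int_of_exp_mul_I_sq_eq_one hδ
  obtain ⟨m, hm, hem⟩ := exists_int_of_exp_mul_I_sq_eq_one hδ'
  obtain ⟨k₁, hk₁, hek₁⟩ := exists_int_of_exp_mul_I_sq_eq_one (r := t₁ * δ₁) (by rw [hδ₁]; norm_num)
  obtain ⟨m₁, hm₁, -⟩ := exists_int_of_exp_mul_I_sq_eq_one hδ₁'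
  obtain ⟨k₂, hk₂, -⟩ := exists_int_of_exp_mul_I_sq_eq_one hδ₂'
  obtain ⟨m₂, hm₂, hem₂⟩ := exists_int_of_exp_mul_I_sq_eq_one (r := t₂ * δ₂) (by rw [hδ₂]; norm_num)
  -- `k m' π² = (t₁ δ) (t₂ δ') = (t₁ δ') (t₂ δ) = k' m π²`
  have cross {k m k' m' : ℤ} {δ' : ℝ} (hk : t₁ * δ = k * π) (hm : t₂ * δ = m * π)
      (hk' : t₁ * δ' = k' * π) (hm' : t₂ * δ' = m' * π) : k * m' = k' * m := by
    have : ((k * m' : ℤ) : ℝ) * π ^ 2 = ((k' * m : ℤ) : ℝ) * π ^ 2 := by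
      push_cast
      linear_combination (-(m' * π)) * hk - (t₁ * δ) * hm' + (m * π) * hk' + (t₁ * δ') * hm
    exact_mod_cast mul_right_cancel₀ (by positivity) this
  have hpar := Int.even_iff_even_of_mul_eq_mul (cross hk hm hk₁ hm₁) (cross hk hm hk₂ hm₂)
    (Int.not_even_iff_odd.mp fun h => by rw [hek₁, h.neg_one_zpow] at hδ₁; norm_num at hδ₁)
    (Int.not_even_iff_odd.mp fun h => by rw [hem₂, h.neg_one_zpow] at hδ₂; norm_num at hδ₂)
  rw [hek, hem]
  by_cases hk : Even k
  · rw [hk.neg_one_zpow, (hpar.mp hk).neg_one_zpow]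
  · rw [(Int.not_even_iff_odd.mp hk).neg_one_zpow,
      (Int.not_even_iff_odd.mp (hpar.not.mp hk)).neg_one_zpow]

def IsSignPattern {κ : Type*} (S : Set κ) (θ : κ → ℝ) (t : ℝ) (s : κ → ℂ) : Prop :=
  ∀ i ∈ S, ∀ j ∈ S, s i * s j = cexp (↑(t * (θ i - θ j)) * I)

theorem isSignPattern_of_sq_eq_one {κ : Type*} {S : Set κ} {θ : κ → ℝ} {t : ℝ} {α : ℂ}
    (h : ∀ j ∈ S, (α * cexp (↑(t * θ j) * I)) ^ 2 = 1) :
    IsSignPattern S θ t fun j => α * cexp (↑(t * θ j) * I) := by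
  intro i _ j hj
  have hsplit : cexp (↑(t * θ i) * I) = cexp (↑(t * (θ i - θ j)) * I) * cexp (↑(t * θ j) * I) := by
    rw [← Complex.exp_add]; push_cast; ring_nf
  simp only [hsplit]
  linear_combination cexp (↑(t * (θ i - θ j)) * I) * h j hj

namespace IsSignPattern

variable {κ : Type*} {S : Set κ} {θ : κ → ℝ} {t : ℝ} {s : κ → ℂ}

theorem mul_self_eq_one (hs : IsSignPattern S θ t s) {j : κ} (hj : j ∈ S) : s j * s j = 1 := by
  simpa using hs j hj j hj

theorem exp_sq_eq_one (hs : IsSignPattern S θ t s) {i j : κ} (hi : i ∈ S) (hj : j ∈ S) :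
    cexp (↑(t * (θ i - θ j)) * I) ^ 2 = 1 := by
  rw [← hs i hi j hj, mul_pow, sq, sq, hs.mul_self_eq_one hi, hs.mul_self_eq_one hj, one_mul]

theorem exp_eq_neg_one (hs : IsSignPattern S θ t s) {i j : κ} (hi : i ∈ S) (hj : j ∈ S)
    (hne : s i ≠ s j) : cexp (↑(t * (θ i - θ j)) * I) = -1 := by
  rw [← hs i hi j hj]
  rcases mul_self_eq_one_iff.mp (hs.mul_self_eq_one hi) with h | h <;>
    rcases mul_self_eq_one_iff.mp (hs.mul_self_eq_one hj) with h' | h' <;> simp_all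

theorem eq_const_or_eq_const_or_eq_mul {t₁ t₂ : ℝ} {s₁ s₂ : κ → ℂ}
    (hs₁ : IsSignPattern S θ t₁ s₁) (hs₂ : IsSignPattern S θ t₂ s₂) :
    ∃ u : ℂ, (u = 1 ∨ u = -1) ∧
      ((∀ j ∈ S, s₁ j = u) ∨ (∀ j ∈ S, s₂ j = u) ∨ ∀ j ∈ S, s₂ j = u * s₁ j) := by
  rcases S.eq_empty_or_nonempty with rfl | ⟨j₀, hj₀⟩
  · exact ⟨1, Or.inl rfl, Or.inl fun j hj => hj.elim⟩
  by_cases hc₁ : ∀ j ∈ S, s₁ j = s₁ j₀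
  · exact ⟨s₁ j₀, mul_self_eq_one_iff.mp (hs₁.mul_self_eq_one hj₀), Or.inl hc₁⟩
  by_cases hc₂ : ∀ j ∈ S, s₂ j = s₂ j₀
  · exact ⟨s₂ j₀, mul_self_eq_one_iff.mp (hs₂.mul_self_eq_one hj₀), Or.inr (Or.inl hc₂)⟩
  push Not at hc₁ hc₂
  obtain ⟨j₁, hj₁, hne₁⟩ := hc₁
  obtain ⟨j₂, hj₂, hne₂⟩ := hc₂
  refine ⟨s₂ j₀ * s₁ j₀, ?_, Or.inr (Or.inr fun j hj => ?_)⟩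
  · rw [← mul_self_eq_one_iff, mul_mul_mul_comm, hs₂.mul_self_eq_one hj₀,
      hs₁.mul_self_eq_one hj₀, one_mul]
  · have h := exp_mul_I_eq_of_eq_neg_one (hs₁.exp_eq_neg_one hj₁ hj₀ hne₁)
      (hs₂.exp_sq_eq_one hj₁ hj₀) (hs₂.exp_eq_neg_one hj₂ hj₀ hne₂) (hs₁.exp_sq_eq_one hj₂ hj₀)
      (hs₁.exp_sq_eq_one hj hj₀) (hs₂.exp_sq_eq_one hj hj₀)
    rw [← hs₁ j hj j₀ hj₀, ← hs₂ j hj j₀ hj₀] at h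
    linear_combination (-s₂ j₀) * h - s₂ j * hs₂.mul_self_eq_one hj₀

end IsSignPattern

variable {ι : Type*} [Fintype ι] [DecidableEq ι]

theorem Matrix.exp_mem_unitary_of_conjTranspose_eq_neg {X : Matrix ι ι ℂ} (hX : Xᴴ = -X) :
    NormedSpace.exp X ∈ unitary (Matrix ι ι ℂ) := by
  have hdet : IsUnit (NormedSpace.exp X).det := (isUnit_iff_isUnit_det _).mp (isUnit_exp X)
  rw [Unitary.mem_iff, star_eq_conjTranspose, ← exp_conjTranspose, hX, exp_neg]
  exact ⟨nonsing_inv_mul _ hdet, mul_nonsing_inv _ hdet⟩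

theorem Matrix.IsSymm.mulVec_eq_smul_of_mulVec_eq_smul {U : Matrix ι ι ℂ} (hU : U.IsSymm)
    (hu : U ∈ unitary (Matrix ι ι ℂ)) {x y : ι → ℂ} (hx : star x = x) (hy : star y = y)
    {γ : ℂ} (hγ : ‖γ‖ = 1) (h : U *ᵥ x = γ • y) : U *ᵥ y = γ • x := by
  have hconj : x ᵥ* Uᴴ = star γ • y := by
    rw [← hx, ← star_mulVec, h, star_smul, hy]
  have hγγ : γ * star γ = 1 := by
    rw [Complex.star_def, Complex.mul_conj', hγ]; norm_num
  calc U *ᵥ y = (γ * star γ) • (y ᵥ* U) := by rw [hγγ, one_smul, ← vecMul_transpose, hU.eq]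
    _ = γ • (x ᵥ* (Uᴴ * U)) := by rw [← vecMul_vecMul, hconj, smul_vecMul, smul_smul]
    _ = γ • x := by rw [← star_eq_conjTranspose, Unitary.star_mul_self_of_mem hu, vecMul_one]

namespace Matrix.IsHermitian

variable {A : Matrix ι ι ℂ} (hA : A.IsHermitian)

noncomputable def eigenCoords : (ι → ℂ) →ₗ[ℂ] ι → ℂ :=
  (star (hA.eigenvectorUnitary : Matrix ι ι ℂ)).mulVecLin

theorem eigenCoords_injective : Function.Injective hA.eigenCoords := by
  intro u v h
  have := congrArg ((hA.eigenvectorUnitary : Matrix ι ι ℂ) *ᵥ ·) h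
  simpa [eigenCoords, mulVec_mulVec] using this

theorem semiconjBy_star_eigenvectorUnitary :
    SemiconjBy (star (hA.eigenvectorUnitary : Matrix ι ι ℂ)) A
      (diagonal (RCLike.ofReal ∘ hA.eigenvalues)) := by
  have h := hA.conjStarAlgAut_star_eigenvectorUnitary
  rw [Unitary.conjStarAlgAut_star_apply] at h
  rw [SemiconjBy, ← h, mul_assoc _ _ (star _), Unitary.mul_star_self_of_mem hA.eigenvectorUnitary.2,
    mul_one]

theorem eigenCoords_exp_smul_mulVec (c : ℂ) (u : ι → ℂ) (j : ι) :
    hA.eigenCoords (NormedSpace.exp (c • A) *ᵥ u) j =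
      cexp (c * hA.eigenvalues j) * hA.eigenCoords u j := by
  have h : SemiconjBy (star (hA.eigenvectorUnitary : Matrix ι ι ℂ)) (NormedSpace.exp (c • A))
      (NormedSpace.exp (c • diagonal (RCLike.ofReal ∘ hA.eigenvalues))) :=
    open scoped Norms.Operator in (hA.semiconjBy_star_eigenvectorUnitary.smul_right c).exp_right
  rw [← diagonal_smul, exp_diagonal] at h
  rw [eigenCoords, mulVecLin_apply, mulVecLin_apply, mulVec_mulVec, h.eq, ← mulVec_mulVec,
    mulVec_diagonal, Pi.coe_exp, ← exp_eq_exp_ℂ]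
  rfl

theorem eq_smul_of_eigenCoords_eq_mul {x y y' f g : ι → ℂ} {u : ℂ}
    (hy : ∀ j, hA.eigenCoords y j = f j * hA.eigenCoords x j)
    (hy' : ∀ j, hA.eigenCoords y' j = g j * hA.eigenCoords x j)
    (hfg : ∀ j ∈ Function.support (hA.eigenCoords x), g j = u * f j) : y' = u • y := by
  apply hA.eigenCoords_injective
  ext j
  rw [map_smul, Pi.smul_apply, smul_eq_mul, hy, hy']
  by_cases hj : hA.eigenCoords x j = 0
  · simp [hj]
  · rw [hfg j hj, mul_assoc]

theorem exists_sign_of_exp_mulVec_eq_smul (hAs : A.IsSymm) {t : ℝ} {γ : ℂ} (hγ : ‖γ‖ = 1)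
    {x y : ι → ℂ} (hx : star x = x) (hy : star y = y)
    (h : NormedSpace.exp ((I * t) • A) *ᵥ x = γ • y) :
    ∃ s : ι → ℂ, (∀ j, hA.eigenCoords y j = s j * hA.eigenCoords x j) ∧
      IsSignPattern (Function.support (hA.eigenCoords x)) hA.eigenvalues t s := by
  have hU : NormedSpace.exp ((I * t) • A) ∈ unitary (Matrix ι ι ℂ) :=
    exp_mem_unitary_of_conjTranspose_eq_neg (by simp [conjTranspose_smul, hA.eq])
  have hrev := (hAs.smul (I * t)).exp.mulVec_eq_smul_of_mulVec_eq_smul hU hx hy hγ h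
  have hγγ : conj γ * γ = 1 := by
    rw [Complex.conj_mul', hγ]; norm_num
  have coords {u v : ι → ℂ} (huv : NormedSpace.exp ((I * t) • A) *ᵥ u = γ • v) (j : ι) :
      cexp (↑(t * hA.eigenvalues j) * I) * hA.eigenCoords u j = γ * hA.eigenCoords v j := by
    have := congrFun (congrArg hA.eigenCoords huv) j
    rw [eigenCoords_exp_smul_mulVec, map_smul, Pi.smul_apply, smul_eq_mul] at this
    rw [← this]
    push_cast
    ring_nf
  refine ⟨fun j => conj γ * cexp (↑(t * hA.eigenvalues j) * I), fun j => ?_,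
    isSignPattern_of_sq_eq_one fun j hj => mul_right_cancel₀ hj ?_⟩
  · linear_combination (-conj γ) * coords h j - hA.eigenCoords y j * hγγ
  · linear_combination (conj γ ^ 2 * cexp (↑(t * hA.eigenvalues j) * I)) * coords h j
      + conj γ * coords hrev j
      + (conj γ * cexp (↑(t * hA.eigenvalues j) * I) * hA.eigenCoords y j
        + hA.eigenCoords x j) * hγγ

end Matrix.IsHermitian

theorem star_pairState [DecidableEq V] (a b : V) : star (pairState a b) = pairState a b := by
  ext v
  simp only [pairState, Pi.star_apply, Pi.sub_apply, star_sub, Pi.single_apply]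
  split_ifs <;> simp

theorem eq_and_eq_of_pairState_eq [DecidableEq V] {a b c d : V} (hab : a ≠ b)
    (h : pairState c d = pairState a b) : c = a ∧ d = b := by
  have ha := congrFun h a
  have hb := congrFun h b
  simp only [pairState, Pi.sub_apply, Pi.single_apply, if_neg hab, if_neg hab.symm] at ha hb
  grind

theorem sym2_eq_of_pairState_eq_smul [DecidableEq V] {a b c d : V} {u : ℂ} (hab : a ≠ b)
    (hu : u = 1 ∨ u = -1) (h : pairState c d = u • pairState a b) : s(c, d) = s(a, b) := by
  rcases hu with rfl | rfl
  · obtain ⟨rfl, rfl⟩ := eq_and_eq_of_pairState_eq hab (by simpa using h)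
    rfl
  · have h' : pairState c d = pairState b a := by simpa [pairState] using h
    obtain ⟨rfl, rfl⟩ := eq_and_eq_of_pairState_eq hab.symm h'
    exact Sym2.eq_swap

theorem pst_monogamy_general [Fintype V] [DecidableEq V] (G : SimpleGraph V) [DecidableRel G.Adj]
    (a b c d c' d' : V) (hab : a ≠ b) (hcd : c ≠ d)
    (hne : s(c, d) ≠ s(a, b)) (hne' : s(c', d') ≠ s(a, b))
    (t₁ t₂ : ℝ)
    (h₁ : PerfectPairStateTransfer G t₁ a b c d)
    (h₂ : PerfectPairStateTransfer G t₂ a b c' d') :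
    s(c, d) = s(c', d') := by
  have hL := G.isHermitian_lapMatrix ℂ
  obtain ⟨γ₁, hγ₁, h₁⟩ := h₁
  obtain ⟨γ₂, hγ₂, h₂⟩ := h₂
  obtain ⟨s₁, hy₁, hs₁⟩ := hL.exists_sign_of_exp_mulVec_eq_smul (G.isSymm_lapMatrix ℂ) hγ₁
    (star_pairState a b) (star_pairState c d) h₁
  obtain ⟨s₂, hy₂, hs₂⟩ := hL.exists_sign_of_exp_mulVec_eq_smul (G.isSymm_lapMatrix ℂ) hγ₂
    (star_pairState a b) (star_pairState c' d') h₂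
  have hx (j : V) : hL.eigenCoords (pairState a b) j = 1 * hL.eigenCoords (pairState a b) j :=
    (one_mul _).symm
  obtain ⟨u, hu, hs | hs | hs⟩ := hs₁.eq_const_or_eq_const_or_eq_mul hs₂
  · refine absurd (sym2_eq_of_pairState_eq_smul hab hu ?_) hne
    exact hL.eq_smul_of_eigenCoords_eq_mul hx hy₁ fun j hj => by rw [hs j hj, mul_one]
  · refine absurd (sym2_eq_of_pairState_eq_smul hab hu ?_) hne'
    exact hL.eq_smul_of_eigenCoords_eq_mul hx hy₂ fun j hj => by rw [hs j hj, mul_one]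
  · exact (sym2_eq_of_pairState_eq_smul hcd hu (hL.eq_smul_of_eigenCoords_eq_mul hy₁ hy₂ hs)).symm

/-- Monogamy of perfect pair state transfer. -/
theorem pst_monogamy [Fintype V] [DecidableEq V] (G : SimpleGraph V) [DecidableRel G.Adj]
    (a b c d c' d' : V) (hab : a ≠ b) (hcd : c ≠ d) (hcd' : c' ≠ d')
    (hne : s(c, d) ≠ s(a, b)) (hne' : s(c', d') ≠ s(a, b))
    (t₁ t₂ : ℝ) (ht₁ : 0 < t₁) (ht₂ : 0 < t₂)
    (h₁ : PerfectPairStateTransfer G t₁ a b c d)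
    (h₂ : PerfectPairStateTransfer G t₂ a b c' d') :
    s(c, d) = s(c', d') :=
  pst_monogamy_general G a b c d c' d' hab hcd hne hne' t₁ t₂ h₁ h₂
end

section
/- Let G be a finite simple graph with Laplacian L and transition matrix U(t) = exp(itL), and let a ≠ b be vertices of G. The pair state e_a − e_b is fixed (i.e., for every t ∈ ℝ there exists γ ∈ ℂ with |γ| = 1 such that U(t)(e_a − e_b) = γ(e_a − e_b)) if and only if a and b are twins in G, that is, N(a)∖{b} = N(b)∖{a}, where N(v) denotes the set of neighbours of v. -/
open Matrix

variable {V : Type*}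

/-!
If `U(t)(e_a - e_b)` stays on the line `ℂ (e_a - e_b)` for all `t`, differentiating at `t = 0`
shows that `e_a - e_b` is an eigenvector of `L`. Conversely an eigenvector of `L` with eigenvalue
`λ` is an eigenvector of every `U(t)` with eigenvalue `exp(itλ)`, of modulus one as `λ` is real.

For `x ∉ {a, b}` the `x`-coordinate of `L (e_a - e_b)` is `[x ~ b] - [x ~ a]`, so it vanishes
for all such `x` exactly when `a` and `b` are twins. A vector supported on `{a, b}` is a multiple
of `e_a - e_b` as soon as its coordinates sum to zero, which holds on the range of `L`
since `1ᵀ L = 0`.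
-/

-- The choice of norm is irrelevant: it only gives access to the analytic theory of `exp`.
attribute [local instance] Matrix.linftyOpNormedAddCommGroup Matrix.linftyOpNormedRing
  Matrix.linftyOpNormedAlgebra

theorem HasDerivAt.mem_of_forall_mem {𝕜 F : Type*} [NontriviallyNormedField 𝕜]
    [NormedAddCommGroup F] [NormedSpace 𝕜 F] {f : 𝕜 → F} {f' : F} {x : 𝕜}
    {p : Submodule 𝕜 F} (hp : IsClosed (p : Set F)) (hf : HasDerivAt f f' x)
    (h : ∀ t, f t ∈ p) : f' ∈ p :=
  hp.mem_of_tendsto (hasDerivAt_iff_tendsto_slope.mp hf) <| Filter.Eventually.of_forall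
    fun t => by rw [slope_def_module]; exact p.smul_mem _ (p.sub_mem (h t) (h x))

namespace Matrix

variable {n : Type*} [Fintype n] [DecidableEq n]

theorem exp_mulVec_of_mulVec_eq_smul {M : Matrix n n ℂ} {v : n → ℂ} {c : ℂ}
    (h : M *ᵥ v = c • v) : NormedSpace.exp M *ᵥ v = Complex.exp c • v := by
  rw [Complex.exp_eq_exp_ℂ]
  have hpow : ∀ k : ℕ, M ^ k *ᵥ v = c ^ k • v := by
    intro k
    induction k with
    | zero => simp
    | succ k ih => rw [pow_succ', ← mulVec_mulVec, ih, mulVec_smul, h, smul_smul, ← pow_succ]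
  have hM := (NormedSpace.exp_series_hasSum_exp' (𝕂 := ℂ) M).map
    (mulVec.addMonoidHomLeft v) (continuous_id.matrix_mulVec continuous_const)
  have hc := (NormedSpace.exp_series_hasSum_exp' (𝕂 := ℂ) c).smul_const v
  refine hM.unique (hc.congr_fun fun k => ?_)
  simp [mulVec.addMonoidHomLeft, smul_mulVec, hpow, smul_smul]

theorem mulVec_mem_span_of_forall_exp_smul_mulVec_mem {X : Matrix n n ℂ} {v : n → ℂ}
    (h : ∀ t : ℝ, NormedSpace.exp (t • X) *ᵥ v ∈ ℂ ∙ v) : X *ᵥ v ∈ ℂ ∙ v := by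
  let p : Submodule ℂ (Matrix n n ℂ) := (ℂ ∙ v).comap ((mulVecBilin ℂ ℂ).flip v)
  have hderiv : HasDerivAt (fun t : ℝ => NormedSpace.exp (t • X)) X 0 := by
    have := hasDerivAt_exp_smul_const (𝕂 := ℝ) X 0
    rw [zero_smul, NormedSpace.exp_zero, one_mul] at this
    exact this
  exact hderiv.mem_of_forall_mem (p := p.restrictScalars ℝ) p.closed_of_finiteDimensional h

end Matrix

theorem pairState_apply [DecidableEq V] (a b x : V) :
    pairState a b x = (if x = a then 1 else 0) - (if x = b then 1 else 0) := by
  simp [pairState, Pi.single_apply]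

theorem eq_smul_pairState_of_sum_eq_zero [Fintype V] [DecidableEq V] {w : V → ℂ} {a b : V}
    (hw : ∀ x, x ≠ a → x ≠ b → w x = 0) (hsum : ∑ x, w x = 0) : w = w a • pairState a b := by
  rcases eq_or_ne a b with rfl | hab
  · have hwa : w a = 0 := by rwa [Fintype.sum_eq_single a fun x hx => hw x hx hx] at hsum
    funext x
    by_cases hx : x = a
    · simp [hx, hwa]
    · simp [hw x hx hx, hwa]
  · have hwb : w b = -w a := by
      rw [Fintype.sum_eq_add a b hab fun x hx => hw x hx.1 hx.2] at hsum
      linear_combination hsum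
    funext x
    by_cases hxa : x = a
    · simp [hxa, pairState_apply, hab]
    by_cases hxb : x = b
    · simp [hxb, pairState_apply, hab.symm, hwb]
    · simp [hw x hxa hxb, pairState_apply, hxa, hxb]

namespace SimpleGraph

theorem neighborSet_sdiff_eq_iff (G : SimpleGraph V) {a b : V} :
    G.neighborSet a \ {b} = G.neighborSet b \ {a} ↔
      ∀ x, x ≠ a → x ≠ b → (G.Adj a x ↔ G.Adj b x) := by
  simp only [Set.ext_iff, Set.mem_sdiff, mem_neighborSet, Set.mem_singleton_iff]
  refine ⟨fun h x hxa hxb => by simpa [hxa, hxb] using h x, fun h x => ?_⟩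
  by_cases hxa : x = a
  · subst hxa; simp
  by_cases hxb : x = b
  · subst hxb; simp
  · simpa [hxa, hxb] using h x hxa hxb

variable [Fintype V] [DecidableEq V] (G : SimpleGraph V) [DecidableRel G.Adj]

theorem sum_lapMatrix_mulVec {R : Type*} [CommRing R] (w : V → R) :
    ∑ x, (G.lapMatrix R *ᵥ w) x = 0 := by
  rw [← one_dotProduct, dotProduct_mulVec, ← mulVec_transpose, (G.isSymm_lapMatrix (R := R)).eq]
  change (G.lapMatrix R *ᵥ fun _ => 1) ⬝ᵥ w = 0
  rw [lapMatrix_mulVec_const_eq_zero, zero_dotProduct]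

theorem lapMatrix_mulVec_pairState_apply (a b x : V) :
    (G.lapMatrix ℂ *ᵥ pairState a b) x = G.degree x * pairState a b x -
      ((if G.Adj x a then 1 else 0) - (if G.Adj x b then 1 else 0)) := by
  simp [lapMatrix_mulVec_apply, pairState_apply, Finset.sum_sub_distrib, Finset.sum_ite_eq']

theorem im_lapMatrix_mulVec_pairState_apply (a b x : V) :
    ((G.lapMatrix ℂ *ᵥ pairState a b) x).im = 0 := by
  rw [lapMatrix_mulVec_pairState_apply]
  simp only [pairState_apply]
  split_ifs <;> simp

theorem lapMatrix_mulVec_pairState_apply_eq_zero_iff {a b x : V} (hxa : x ≠ a) (hxb : x ≠ b) :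
    (G.lapMatrix ℂ *ᵥ pairState a b) x = 0 ↔ (G.Adj a x ↔ G.Adj b x) := by
  rw [lapMatrix_mulVec_pairState_apply, G.adj_comm a, G.adj_comm b]
  by_cases ha : G.Adj x a <;> by_cases hb : G.Adj x b <;> simp [ha, hb, pairState_apply, hxa, hxb]

theorem lapMatrix_mulVec_pairState_eq_smul {a b : V}
    (h : G.neighborSet a \ {b} = G.neighborSet b \ {a}) :
    G.lapMatrix ℂ *ᵥ pairState a b = (G.lapMatrix ℂ *ᵥ pairState a b) a • pairState a b :=
  eq_smul_pairState_of_sum_eq_zero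
    (fun x hxa hxb => (G.lapMatrix_mulVec_pairState_apply_eq_zero_iff hxa hxb).mpr
      (G.neighborSet_sdiff_eq_iff.mp h x hxa hxb))
    (G.sum_lapMatrix_mulVec _)

theorem neighborSet_sdiff_eq_of_lapMatrix_mulVec_pairState_mem_span {a b : V}
    (h : G.lapMatrix ℂ *ᵥ pairState a b ∈ ℂ ∙ pairState a b) :
    G.neighborSet a \ {b} = G.neighborSet b \ {a} := by
  obtain ⟨c, hc⟩ := Submodule.mem_span_singleton.mp h
  refine G.neighborSet_sdiff_eq_iff.mpr fun x hxa hxb =>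
    (G.lapMatrix_mulVec_pairState_apply_eq_zero_iff hxa hxb).mp ?_
  simp [← hc, pairState_apply, hxa, hxb]

end SimpleGraph

theorem transitionMatrix_eq_exp_smul [Fintype V] [DecidableEq V] (G : SimpleGraph V)
    [DecidableRel G.Adj] (t : ℝ) :
    transitionMatrix G t = NormedSpace.exp (t • (Complex.I • G.lapMatrix ℂ)) := by
  rw [transitionMatrix, mul_comm, ← smul_smul, Complex.coe_smul]

theorem fixed_iff_twins_general [Fintype V] [DecidableEq V] (G : SimpleGraph V)
    [DecidableRel G.Adj] (a b : V) :
    (∀ t : ℝ, ∃ γ : ℂ, ‖γ‖ = 1 ∧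
        (transitionMatrix G t).mulVec (pairState a b) = γ • pairState a b) ↔
      G.neighborSet a \ {b} = G.neighborSet b \ {a} := by
  constructor
  · intro h
    have hfix : ∀ t : ℝ, NormedSpace.exp (t • (Complex.I • G.lapMatrix ℂ)) *ᵥ pairState a b ∈
        ℂ ∙ pairState a b := fun t => by
      obtain ⟨γ, -, hγ⟩ := h t
      rw [← transitionMatrix_eq_exp_smul, hγ]
      exact Submodule.smul_mem _ γ (Submodule.mem_span_singleton_self _)
    have hL := mulVec_mem_span_of_forall_exp_smul_mulVec_mem hfix
    rw [smul_mulVec, Submodule.smul_mem_iff _ Complex.I_ne_zero] at hL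
    exact G.neighborSet_sdiff_eq_of_lapMatrix_mulVec_pairState_mem_span hL
  · intro h t
    set c := (G.lapMatrix ℂ *ᵥ pairState a b) a
    refine ⟨Complex.exp (Complex.I * t * c), ?_, ?_⟩
    · simp [Complex.norm_exp, Complex.mul_re, G.im_lapMatrix_mulVec_pairState_apply, c]
    · have hc : ((Complex.I * t) • G.lapMatrix ℂ) *ᵥ pairState a b =
          (Complex.I * t * c) • pairState a b := by
        rw [smul_mulVec, G.lapMatrix_mulVec_pairState_eq_smul h, smul_smul]
      exact exp_mulVec_of_mulVec_eq_smul hc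

/-- A pair state `e_a - e_b` is fixed if and only if `a` and `b` are twins. -/
theorem fixed_iff_twins [Fintype V] [DecidableEq V] (G : SimpleGraph V)
    [DecidableRel G.Adj] (a b : V) (hab : a ≠ b) :
    (∀ t : ℝ, ∃ γ : ℂ, ‖γ‖ = 1 ∧
        (transitionMatrix G t).mulVec (pairState a b) = γ • pairState a b) ↔
      G.neighborSet a \ {b} = G.neighborSet b \ {a} :=
  fixed_iff_twins_general G a b
end

section
/- Transitivity of perfect pair state transfer: let G be a finite simple graph with transition matrix U(t) = exp(itL), let a, b, c be pairwise distinct vertices and α, β, γ be pairwise distinct vertices of G. If there is perfect pair state transfer between e_a − e_b and e_α − e_β at time τ, and there is perfect pair state transfer between e_b − e_c and e_β − e_γ at the same time τ, then there is perfect pair state transfer between e_a − e_c and e_α − e_γ at time τ. -/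
/-!
`U(τ)` is unitary, so it preserves the Hermitian product, and for pairwise distinct vertices
`⟨e_a - e_b, e_b - e_c⟩ = -1`. Applied to the images `γ₁ (e_α - e_β)` and `γ₂ (e_β - e_γ)` this
gives `conj γ₁ * γ₂ = 1`, i.e. the two phases coincide, and then
`U(τ)(e_a - e_c) = U(τ)(e_a - e_b) + U(τ)(e_b - e_c) = γ₁ (e_α - e_γ)`.
-/

open Matrix

variable {V : Type*}

namespace Matrix

variable {n : Type*} [Fintype n] [DecidableEq n]

theorem exp_mem_unitary_of_mem_skewAdjoint {𝕜 : Type*} [RCLike 𝕜] {A : Matrix n n 𝕜}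
    (hA : A ∈ skewAdjoint (Matrix n n 𝕜)) : NormedSpace.exp A ∈ unitary (Matrix n n 𝕜) :=
  -- any choice of norm will do, as `exp` only depends on the topology; the L² operator norm
  -- makes matrices a C⋆-algebra
  open scoped Norms.L2Operator in
  letI : NormedAlgebra ℚ (Matrix n n 𝕜) := .restrictScalars ℚ 𝕜 _
  NormedSpace.exp_mem_unitary_of_mem_skewAdjoint hA

theorem star_mulVec_dotProduct_mulVec_of_mem_unitary {R : Type*} [Semiring R] [StarRing R]
    {U : Matrix n n R} (hU : U ∈ unitary (Matrix n n R)) (x y : n → R) :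
    star (U *ᵥ x) ⬝ᵥ U *ᵥ y = star x ⬝ᵥ y := by
  rw [star_mulVec, dotProduct_mulVec, vecMul_vecMul, ← star_eq_conjTranspose,
    Unitary.star_mul_self_of_mem hU, vecMul_one]

end Matrix

theorem RCLike.eq_of_norm_eq_one_of_star_mul_eq_one {𝕜 : Type*} [RCLike 𝕜] {z w : 𝕜}
    (hz : ‖z‖ = 1) (h : star z * w = 1) : w = z := by
  have hz' : z * star z = 1 := by rw [RCLike.star_def, RCLike.mul_conj, hz]; norm_num
  calc w = z * star z * w := by rw [hz', one_mul]
    _ = z := by rw [mul_assoc, h, mul_one]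

theorem transitionMatrix_mem_unitary [Fintype V] [DecidableEq V] (G : SimpleGraph V)
    [DecidableRel G.Adj] (t : ℝ) : transitionMatrix G t ∈ unitary (Matrix V V ℂ) :=
  exp_mem_unitary_of_mem_skewAdjoint <|
    (G.isHermitian_lapMatrix ℂ).isSelfAdjoint.smul_mem_skewAdjoint (by simp [skewAdjoint.mem_iff])

theorem pairState_add_pairState [DecidableEq V] (a b c : V) :
    pairState a b + pairState b c = pairState a c := by
  simp only [pairState, sub_add_sub_cancel]

theorem star_pairState_dotProduct_pairState [Fintype V] [DecidableEq V] {a b c : V}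
    (hab : a ≠ b) (hac : a ≠ c) (hbc : b ≠ c) : star (pairState a b) ⬝ᵥ pairState b c = -1 := by
  simp [pairState, Pi.star_single, dotProduct_sub, hab, hac, hbc]

/-- Transitivity of perfect pair state transfer. -/
theorem pst_trans [Fintype V] [DecidableEq V] (G : SimpleGraph V) [DecidableRel G.Adj]
    (a b c α β γ : V) (hab : a ≠ b) (hac : a ≠ c) (hbc : b ≠ c)
    (hαβ : α ≠ β) (hαγ : α ≠ γ) (hβγ : β ≠ γ) (τ : ℝ)
    (h₁ : PerfectPairStateTransfer G τ a b α β)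
    (h₂ : PerfectPairStateTransfer G τ b c β γ) :
    PerfectPairStateTransfer G τ a c α γ := by
  obtain ⟨γ₁, hγ₁, hU₁⟩ := h₁
  obtain ⟨γ₂, -, hU₂⟩ := h₂
  have hphase : star γ₁ * γ₂ * -1 = -1 := by
    have := star_mulVec_dotProduct_mulVec_of_mem_unitary (transitionMatrix_mem_unitary G τ)
      (pairState a b) (pairState b c)
    rwa [hU₁, hU₂, star_smul, smul_dotProduct, dotProduct_smul, smul_eq_mul, smul_eq_mul,
      star_pairState_dotProduct_pairState hαβ hαγ hβγ,
      star_pairState_dotProduct_pairState hab hac hbc, ← mul_assoc] at this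
  have hγ : γ₂ = γ₁ :=
    RCLike.eq_of_norm_eq_one_of_star_mul_eq_one hγ₁ (by linear_combination -hphase)
  refine ⟨γ₁, hγ₁, ?_⟩
  rw [← pairState_add_pairState a b c, mulVec_add, hU₁, hU₂, hγ, ← smul_add,
    pairState_add_pairState]
end
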